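/- arXiv:1708.04334 — 3 statements merged into one kernel-verified Lean document; each statement's English description precedes it below -/
import Mathlib

section
/- Let k ≥ 1, let a < b be real numbers, and let α : [a,b] → ℝ^k be a continuous unit-valued path that is not constant. Then the function D_α : [a,b] → ℕ, defined by D_α(s) = dim_ℚ {β ∈ ℚ^k : ∑_{i=1}^k β_i α_i(s) = 0}, is not constant on [a,b]; that is, there exist s, s' ∈ [a,b] with D_α(s) ≠ D_α(s'). -/
/-- The `ℚ`-subspace of `ℚ^k` of rational vectors `β` with `∑ i, β i * c i = 0`. -/
def rationalRelationSpace (k : ℕ) (c : Fin k → ℝ) : Submodule ℚ (Fin k → ℚ) where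
  carrier := {β | ∑ i, (β i : ℝ) * c i = 0}
  add_mem' := by
    intro a b ha hb
    simp only [Set.mem_setOf_eq] at ha hb ⊢
    simp [Pi.add_apply, Rat.cast_add, add_mul, Finset.sum_add_distrib, ha, hb]
  zero_mem' := by simp
  smul_mem' := by
    intro q a ha
    simp only [Set.mem_setOf_eq] at ha ⊢
    simp [Pi.smul_apply, smul_eq_mul, Rat.cast_mul, mul_assoc, ← Finset.mul_sum, ha]

/-- `D_α(s)`: the `ℚ`-dimension of the space of rational linear relations among the
coordinates of `α s`. -/
noncomputable def Dalpha {k : ℕ} (α : ℝ → EuclideanSpace ℝ (Fin k)) (s : ℝ) : ℕ :=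
  Module.finrank ℚ (rationalRelationSpace k (fun i => α s i))

/-!
If `D_α` were constant, equal to `d`, then for each subspace `W ≤ ℚ^k` the set of parameters
whose relation space is exactly `W` would be closed: once the dimension is fixed it is the set
where `W` is contained in the relation space, an intersection of zero sets of continuous functions.
These countably many disjoint closed sets cover `[a, b]`, so by Sierpiński's theorem only one of
them is nonempty. (For an interval: if two pieces met `[a, b]`, one could choose nested intervals,
the `n`-th avoiding the `n`-th piece, each starting at a point beyond which its piece does not
return; their common point would lie in no piece.)

So the relation space is constant. Then each relation `α_i = q α_j`, `q ∈ ℚ`, holds everywhere or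
nowhere, and by the intermediate value theorem every ratio `α_i / α_j` is constant. Hence
`α s = ±α a`, and connectedness fixes the sign.
-/

open Set Module Function

section NestedIntervals

variable {ι : Type*} {F : ι → Set ℝ} {u v w x y : ℝ}

def IsExitInterval (F : ι → Set ℝ) (u v : ℝ) : Prop :=
  u < v ∧ Icc u v ⊆ ⋃ i, F i ∧ ∃ i, u ∈ F i ∧ Disjoint (Ioc u v) (F i)

theorem exists_isExitInterval {j : ι} (hj : IsClosed (F j)) (hxy : x < y) (hx : x ∈ F j)
    (hy : y ∉ F j) (hcover : Icc x y ⊆ ⋃ i, F i) : ∃ u ∈ Ico x y, IsExitInterval F u y := by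
  set S := F j ∩ Icc x y
  have hbdd : BddAbove S := ⟨y, fun _ ht => ht.2.2⟩
  have hS : sSup S ∈ S := (hj.inter isClosed_Icc).csSup_mem ⟨x, hx, le_rfl, hxy.le⟩ hbdd
  have hSy : sSup S < y := lt_of_le_of_ne hS.2.2 fun h => hy (h ▸ hS.1)
  refine ⟨sSup S, ⟨hS.2.1, hSy⟩, hSy, (Icc_subset_Icc_left hS.2.1).trans hcover, j, hS.1, ?_⟩
  refine disjoint_left.2 fun t ht htj => ?_
  exact (le_csSup hbdd ⟨htj, hS.2.1.trans ht.1.le, ht.2⟩).not_gt ht.1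

variable (hclosed : ∀ i, IsClosed (F i)) (hdisj : Pairwise (Disjoint on F))
include hclosed hdisj

theorem IsExitInterval.exists_mem_not_mem (h : IsExitInterval F u v) (huw : u < w) (hwv : w ≤ v) :
    ∃ x y j, u < x ∧ x < y ∧ y < w ∧ x ∈ F j ∧ y ∉ F j := by
  obtain ⟨huv, hcover, i, hui, hi⟩ := h
  obtain ⟨y, huy, hyw⟩ := exists_between huw
  have hcover' : Icc u y ⊆ ⋃ i, F i := (Icc_subset_Icc_right (hyw.le.trans hwv)).trans hcover
  obtain ⟨l, hyl⟩ := mem_iUnion.1 (hcover' (right_mem_Icc.2 huy.le))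
  obtain ⟨x, hx, hxl⟩ : ∃ x ∈ Ioo u y, x ∉ F l := by
    by_contra! hsub
    have hul : u ∈ F l := (hclosed l).closure_subset_iff.2 hsub
      (by rw [closure_Ioo huy.ne]; exact left_mem_Icc.2 huy.le)
    have hli : l ≠ i := by
      rintro rfl
      exact disjoint_left.1 hi ⟨huy, hyw.le.trans hwv⟩ hyl
    exact disjoint_left.1 (hdisj hli) hul hui
  obtain ⟨j, hxj⟩ := mem_iUnion.1 (hcover' (Ioo_subset_Icc_self hx))
  have hjl : j ≠ l := by rintro rfl; exact hxl hxj
  exact ⟨x, y, j, hx.1, hx.2, hyw, hxj, disjoint_left.1 (hdisj hjl.symm) hyl⟩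

theorem IsExitInterval.exists_disjoint_subinterval (h : IsExitInterval F u v) (n : ι) :
    ∃ u' v', IsExitInterval F u' v' ∧ Icc u' v' ⊆ Icc u v ∧ Disjoint (Icc u' v') (F n) := by
  obtain ⟨w, huw, hwv, hw⟩ : ∃ w, u < w ∧ w ≤ v ∧ Disjoint (Ioo u w) (F n) := by
    by_cases hun : u ∈ F n
    · obtain ⟨huv, -, i, hui, hi⟩ := h
      obtain rfl : i = n := by_contra fun hin => disjoint_left.1 (hdisj hin) hui hun
      exact ⟨v, huv, le_rfl, hi.mono_left Ioo_subset_Ioc_self⟩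
    · obtain ⟨w, huw, hw⟩ :=
        exists_Ico_subset_of_mem_nhds ((hclosed n).isOpen_compl.mem_nhds hun) ⟨v, h.1⟩
      refine ⟨min w v, lt_min huw h.1, min_le_right _ _, disjoint_left.2 fun t ht => ?_⟩
      exact hw ⟨ht.1.le, ht.2.trans_le (min_le_left _ _)⟩
  obtain ⟨x, y, j, hux, hxy, hyw, hxj, hyj⟩ := h.exists_mem_not_mem hclosed hdisj huw hwv
  have hsub : Icc x y ⊆ Ioo u w := Icc_subset_Ioo hux hyw
  obtain ⟨u', hu', hexit⟩ := exists_isExitInterval (hclosed j) hxy hxj hyj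
    (hsub.trans (Ioo_subset_Icc_self.trans (Icc_subset_Icc_right hwv)) |>.trans h.2.1)
  have hsub' : Icc u' y ⊆ Ioo u w := (Icc_subset_Icc_left hu'.1).trans hsub
  exact ⟨u', y, hexit, hsub'.trans (Ioo_subset_Icc_self.trans (Icc_subset_Icc_right hwv)),
    hw.mono_left hsub'⟩

theorem exists_Icc_subset_of_isClosed_of_pairwise_disjoint [Countable ι] {a b : ℝ} (hab : a ≤ b)
    (hcover : Icc a b ⊆ ⋃ i, F i) : ∃ i, Icc a b ⊆ F i := by
  by_contra! hsplit
  obtain ⟨i, hai⟩ := mem_iUnion.1 (hcover (left_mem_Icc.2 hab))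
  obtain ⟨y, hy, hyi⟩ := not_subset.1 (hsplit i)
  have hay : a < y := hy.1.lt_of_ne (by rintro rfl; exact hyi hai)
  obtain ⟨u₀, -, h₀⟩ :=
    exists_isExitInterval (hclosed i) hay hai hyi ((Icc_subset_Icc_right hy.2).trans hcover)
  have : Nonempty ι := ⟨i⟩
  obtain ⟨e, he⟩ := exists_surjective_nat ι
  let T := {p : ℝ × ℝ // IsExitInterval F p.1 p.2}
  have hstep (p : T) (n : ι) :
      ∃ q : T, Icc q.1.1 q.1.2 ⊆ Icc p.1.1 p.1.2 ∧ Disjoint (Icc q.1.1 q.1.2) (F n) := by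
    obtain ⟨u', v', hexit, hsub, hdisj'⟩ := p.2.exists_disjoint_subinterval hclosed hdisj n
    exact ⟨⟨(u', v'), hexit⟩, hsub, hdisj'⟩
  choose next hnext_sub hnext_disj using hstep
  let seq : ℕ → T := fun n => Nat.rec ⟨(u₀, y), h₀⟩ (fun n p => next p (e n)) n
  have hnested : Antitone fun n => Icc (seq n).1.1 (seq n).1.2 :=
    antitone_nat_of_succ_le fun n => hnext_sub (seq n) (e n)
  have hx := mem_iInter.1 (ciSup_mem_iInter_Icc_of_antitone_Icc hnested fun n => (seq n).2.1.le)
  obtain ⟨j, hxj⟩ := mem_iUnion.1 ((seq 0).2.2.1 (hx 0))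
  obtain ⟨n, rfl⟩ := he j
  exact disjoint_left.1 (hnext_disj (seq n) (e n)) (hx (n + 1)) hxj

end NestedIntervals

instance Submodule.countable_of_isNoetherian {R M : Type*} [Semiring R] [AddCommMonoid M]
    [Module R M] [IsNoetherian R M] [Countable M] : Countable (Submodule R M) :=
  Surjective.countable (f := fun s : Finset M => Submodule.span R (s : Set M))
    fun N => IsNoetherian.noetherian N

section RationalRelations

variable {k : ℕ}

theorem mem_rationalRelationSpace {c : Fin k → ℝ} {β : Fin k → ℚ} :
    β ∈ rationalRelationSpace k c ↔ ∑ i, (β i : ℝ) * c i = 0 := Iff.rfl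

theorem sum_ratCast_single_mul (c : Fin k → ℝ) (i : Fin k) (q : ℚ) :
    ∑ j, ((Pi.single i q : Fin k → ℚ) j : ℝ) * c j = q * c i := by
  simp [Pi.single_apply, apply_ite (Rat.cast : ℚ → ℝ), ite_mul]

theorem single_mem_rationalRelationSpace {c : Fin k → ℝ} {i : Fin k} :
    Pi.single i 1 ∈ rationalRelationSpace k c ↔ c i = 0 := by
  simp [mem_rationalRelationSpace, sum_ratCast_single_mul]

theorem single_sub_single_mem_rationalRelationSpace {c : Fin k → ℝ} {i j : Fin k} {q : ℚ} :
    Pi.single i 1 - Pi.single j q ∈ rationalRelationSpace k c ↔ c i = q * c j := by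
  simp [mem_rationalRelationSpace, sub_mul, Finset.sum_sub_distrib, sum_ratCast_single_mul,
    sub_eq_zero]

variable {X : Type*} [TopologicalSpace X] {S : Set X} {c : X → Fin k → ℝ}

theorem isClosed_setOf_le_rationalRelationSpace (hS : IsClosed S) (hc : ContinuousOn c S)
    (W : Submodule ℚ (Fin k → ℚ)) : IsClosed {x ∈ S | W ≤ rationalRelationSpace k (c x)} := by
  have hW : {x ∈ S | W ≤ rationalRelationSpace k (c x)} =
      ⋂ β : W, S ∩ (fun x => ∑ i, ((β : Fin k → ℚ) i : ℝ) * c x i) ⁻¹' {0} := by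
    ext x
    simp only [mem_ofPred_eq, mem_iInter, mem_inter_iff, mem_preimage, mem_singleton_iff]
    exact ⟨fun ⟨hx, hle⟩ β => ⟨hx, hle β.2⟩, fun h => ⟨(h 0).1, fun β hβ => (h ⟨β, hβ⟩).2⟩⟩
  rw [hW]
  refine isClosed_iInter fun β => ?_
  exact ContinuousOn.preimage_isClosed_of_isClosed (by fun_prop) hS isClosed_singleton

theorem isClosed_setOf_rationalRelationSpace_eq {d : ℕ} (hS : IsClosed S) (hc : ContinuousOn c S)
    (hd : ∀ x ∈ S, finrank ℚ (rationalRelationSpace k (c x)) = d) (W : Submodule ℚ (Fin k → ℚ)) :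
    IsClosed {x ∈ S | rationalRelationSpace k (c x) = W} := by
  by_cases hW : finrank ℚ W = d
  · convert isClosed_setOf_le_rationalRelationSpace hS hc W using 3 with x
    refine and_congr_right fun hx => ⟨fun h => h.ge, fun hle => ?_⟩
    exact (Submodule.eq_of_le_of_finrank_eq hle (hW.trans (hd x hx).symm)).symm
  · convert isClosed_empty
    exact eq_empty_of_forall_notMem fun x hx => hW (hx.2 ▸ hd x hx.1)

theorem IsPreconnected.eq_of_forall_eq_ratCast {f : X → ℝ} (hS : IsPreconnected S)
    (hf : ContinuousOn f S) (hfib : ∀ q : ℚ, ∀ x ∈ S, ∀ y ∈ S, f x = q → f y = q)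
    {x y : X} (hx : x ∈ S) (hy : y ∈ S) : f x = f y := by
  wlog hxy : f x < f y generalizing x y
  · rcases (not_lt.1 hxy).eq_or_lt with h | h
    · exact h.symm
    · exact (this hy hx h).symm
  obtain ⟨q, hxq, hqy⟩ := exists_rat_btwn hxy
  obtain ⟨z, hz, hzq⟩ := hS.intermediate_value hx hy hf ⟨hxq.le, hqy.le⟩
  exact absurd (hfib q z hz x hx hzq) hxq.ne

theorem IsPreconnected.div_eq_of_rationalRelationSpace_eq (hS : IsPreconnected S)
    (hc : ContinuousOn c S)
    (hV : ∀ x ∈ S, ∀ y ∈ S, rationalRelationSpace k (c x) = rationalRelationSpace k (c y))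
    {j : Fin k} (hj : ∀ x ∈ S, c x j ≠ 0) (i : Fin k) {x y : X} (hx : x ∈ S) (hy : y ∈ S) :
    c x i / c x j = c y i / c y j := by
  refine hS.eq_of_forall_eq_ratCast (f := fun x => c x i / c x j) (by fun_prop (disch := exact hj))
    (fun q x hx y hy hxq => ?_) hx hy
  have hrel : Pi.single i 1 - Pi.single j q ∈ rationalRelationSpace k (c x) :=
    single_sub_single_mem_rationalRelationSpace.2 ((div_eq_iff (hj x hx)).1 hxq)
  rw [hV x hx y hy, single_sub_single_mem_rationalRelationSpace] at hrel
  exact (div_eq_iff (hj y hy)).2 hrel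

end RationalRelations

theorem IsPreconnected.eq_of_rationalRelationSpace_eq {X : Type*} [TopologicalSpace X] {k : ℕ}
    {S : Set X} (hS : IsPreconnected S) {α : X → EuclideanSpace ℝ (Fin k)}
    (hα : ContinuousOn α S) (hunit : ∀ x ∈ S, ‖α x‖ = 1)
    (hV : ∀ x ∈ S, ∀ y ∈ S,
      rationalRelationSpace k (fun i => α x i) = rationalRelationSpace k (fun i => α y i))
    {x y : X} (hx : x ∈ S) (hy : y ∈ S) : α x = α y := by
  have hx0 : α x ≠ 0 := by simp [← norm_ne_zero_iff, hunit x hx]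
  obtain ⟨j, hxj⟩ : ∃ j, α x j ≠ 0 := by
    by_contra! h
    exact hx0 (by ext i; exact h i)
  have hj : ∀ z ∈ S, α z j ≠ 0 := fun z hz hzj =>
    hxj (single_mem_rationalRelationSpace.1 (hV z hz x hx ▸ single_mem_rationalRelationSpace.2 hzj))
  have hc : ContinuousOn (fun z i => α z i) S := (PiLp.continuous_ofLp 2 _).comp_continuousOn hα
  have hmaps : MapsTo α S {α x, -α x} := by
    intro z hz
    have hprop : α z = (α z j / α x j) • α x := by
      ext i
      rw [PiLp.smul_apply, smul_eq_mul, div_mul_comm,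
        ← hS.div_eq_of_rationalRelationSpace_eq hc hV hj i hz hx, div_mul_cancel₀ _ (hj z hz)]
    have hnorm := hunit z hz
    rw [hprop, norm_smul, hunit x hx, mul_one, Real.norm_eq_abs, abs_eq zero_le_one] at hnorm
    rcases hnorm with h | h
    · exact .inl (by rw [hprop, h, one_smul])
    · exact .inr (by rw [hprop, h, neg_one_smul]; rfl)
  exact hS.constant_of_mapsTo (toFinite _).isDiscrete hα hmaps hx hy

theorem nonconstant_rational_relation_dimension_general
    (k : ℕ) (a b : ℝ) (hab : a < b)
    (α : ℝ → EuclideanSpace ℝ (Fin k))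
    (hcont : ContinuousOn α (Set.Icc a b))
    (hunit : ∀ s ∈ Set.Icc a b, ‖α s‖ = 1)
    (hnc : ¬ ∀ s ∈ Set.Icc a b, ∀ s' ∈ Set.Icc a b, α s = α s') :
    ∃ s ∈ Set.Icc a b, ∃ s' ∈ Set.Icc a b, Dalpha α s ≠ Dalpha α s' := by
  by_contra! hD
  let V (s : ℝ) : Submodule ℚ (Fin k → ℚ) := rationalRelationSpace k (fun i => α s i)
  have hc : ContinuousOn (fun s i => α s i) (Icc a b) :=
    (PiLp.continuous_ofLp 2 _).comp_continuousOn hcont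
  obtain ⟨W, hW⟩ := exists_Icc_subset_of_isClosed_of_pairwise_disjoint
    (F := fun W => {s ∈ Icc a b | V s = W})
    (fun W => isClosed_setOf_rationalRelationSpace_eq isClosed_Icc hc
      (fun s hs => hD s hs a (left_mem_Icc.2 hab.le)) W)
    (fun W W' hne => disjoint_left.2 fun s hs hs' => hne (hs.2.symm.trans hs'.2))
    hab.le (fun s hs => mem_iUnion.2 ⟨V s, hs, rfl⟩)
  exact hnc fun s hs s' hs' => isPreconnected_Icc.eq_of_rationalRelationSpace_eq hcont hunit
    (fun x hx y hy => (hW hx).2.trans (hW hy).2.symm) hs hs'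

/-- A continuous nonconstant unit-valued path `α : [a,b] → ℝ^k` has nonconstant
rational-relation dimension function `D_α`. -/
theorem nonconstant_rational_relation_dimension
    (k : ℕ) (hk : 1 ≤ k) (a b : ℝ) (hab : a < b)
    (α : ℝ → EuclideanSpace ℝ (Fin k))
    (hcont : ContinuousOn α (Set.Icc a b))
    (hunit : ∀ s ∈ Set.Icc a b, ‖α s‖ = 1)
    (hnc : ¬ ∀ s ∈ Set.Icc a b, ∀ s' ∈ Set.Icc a b, α s = α s') :
    ∃ s ∈ Set.Icc a b, ∃ s' ∈ Set.Icc a b, Dalpha α s ≠ Dalpha α s' :=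
  nonconstant_rational_relation_dimension_general k a b hab α hcont hunit hnc
end

section
/- Let k ≥ 1, let a < b be real numbers, and let α : [a,b] → ℝ^k be a continuous unit-valued path that is not constant. Then there exist s ∈ [a,b] and a nonzero β ∈ ℚ^k with ∑_{i=1}^k β_i α_i(s) = 0; equivalently, the function D_α(s) = dim_ℚ {β ∈ ℚ^k : ∑_{i=1}^k β_i α_i(s) = 0} satisfies D_α(s) ≥ 1 at some point s ∈ [a,b]. -/
/-!
If no `α s` satisfies a nontrivial rational relation, then no coordinate of `α s` vanishes and
every ratio `α s j / α s i` (`j ≠ i`) is irrational. By the intermediate value theorem a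
continuous function on an interval avoiding `ℚ` is constant, and one avoiding `0` has constant
sign; so all the `α s` lie on one open ray, and having norm one they coincide.
-/

open Set

def HasRatRelation {ι : Type*} [Fintype ι] (v : ι → ℝ) : Prop :=
  ∃ β : ι → ℚ, β ≠ 0 ∧ ∑ i, (β i : ℝ) * v i = 0

section RatRelation

variable {ι : Type*} [Fintype ι] [DecidableEq ι] {v : ι → ℝ}

theorem ne_zero_of_not_hasRatRelation (h : ¬ HasRatRelation v) (i : ι) : v i ≠ 0 :=
  fun hi => h ⟨Pi.single i 1, by simp,
    by simp [Pi.single_apply, apply_ite (Rat.cast : ℚ → ℝ), ite_mul, hi]⟩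

theorem irrational_div_of_not_hasRatRelation (h : ¬ HasRatRelation v) {i j : ι} (hij : i ≠ j) :
    Irrational (v j / v i) := by
  rintro ⟨q, hq⟩
  have hvj : v j = q * v i := by
    rw [hq, div_mul_cancel₀ _ (ne_zero_of_not_hasRatRelation h i)]
  refine h ⟨Pi.single i q - Pi.single j 1, fun hβ => ?_, ?_⟩
  · simpa [hij] using congrFun hβ j
  · simp [sub_mul, Finset.sum_sub_distrib, Pi.single_apply, apply_ite (Rat.cast : ℚ → ℝ), ite_mul,
      hvj]

end RatRelation

section Preconnected

variable {X : Type*} [TopologicalSpace X] {S : Set X} {f : X → ℝ} {x y : X}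

theorem IsPreconnected.uIcc_subset_image (hS : IsPreconnected S) (hf : ContinuousOn f S)
    (hx : x ∈ S) (hy : y ∈ S) : uIcc (f x) (f y) ⊆ f '' S := by
  rcases le_total (f x) (f y) with h | h
  · rw [uIcc_of_le h]
    exact hS.intermediate_value hx hy hf
  · rw [uIcc_of_ge h]
    exact hS.intermediate_value hy hx hf

theorem IsPreconnected.eq_of_forall_irrational (hS : IsPreconnected S) (hf : ContinuousOn f S)
    (hirr : ∀ t ∈ S, Irrational (f t)) (hx : x ∈ S) (hy : y ∈ S) : f x = f y := by
  by_contra hne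
  obtain ⟨q, hq₁, hq₂⟩ := exists_rat_btwn (min_lt_max.2 hne)
  obtain ⟨t, ht, hft⟩ := hS.uIcc_subset_image hf hx hy ⟨hq₁.le, hq₂.le⟩
  exact hirr t ht ⟨q, hft.symm⟩

theorem IsPreconnected.mul_pos_of_forall_ne_zero (hS : IsPreconnected S) (hf : ContinuousOn f S)
    (hne : ∀ t ∈ S, f t ≠ 0) (hx : x ∈ S) (hy : y ∈ S) : 0 < f x * f y := by
  by_contra! h
  have h0 : (0 : ℝ) ∈ uIcc (f x) (f y) := by
    rcases mul_nonpos_iff.1 h with h | h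
    · exact mem_uIcc.2 (Or.inr ⟨h.2, h.1⟩)
    · exact mem_uIcc.2 (Or.inl h)
  obtain ⟨t, ht, hft⟩ := hS.uIcc_subset_image hf hx hy h0
  exact hne t ht hft

theorem IsPreconnected.eq_of_norm_eq_one_of_not_hasRatRelation {ι : Type*} [Fintype ι]
    (hS : IsPreconnected S) {α : X → EuclideanSpace ℝ ι} (hα : ContinuousOn α S)
    (hunit : ∀ t ∈ S, ‖α t‖ = 1) (hrel : ∀ t ∈ S, ¬ HasRatRelation (α t))
    (hx : x ∈ S) (hy : y ∈ S) : α x = α y := by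
  classical
  obtain ⟨i, -⟩ : ∃ i, α x i ≠ 0 := by
    by_contra! h
    have : α x = 0 := by ext i; exact h i
    simpa [this] using hunit x hx
  have hne : ∀ t ∈ S, α t i ≠ 0 := fun t ht => ne_zero_of_not_hasRatRelation (hrel t ht) i
  have hcoord : ∀ j, ContinuousOn (fun t => α t j) S := fun j =>
    (continuous_apply j).comp_continuousOn ((PiLp.continuous_ofLp 2 _).comp_continuousOn hα)
  have hratio : ∀ j, α x j / α x i = α y j / α y i := by
    intro j
    rcases eq_or_ne i j with rfl | hij
    · rw [div_self (hne x hx), div_self (hne y hy)]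
    · exact hS.eq_of_forall_irrational ((hcoord j).div (hcoord i) hne)
        (fun t ht => irrational_div_of_not_hasRatRelation (hrel t ht) hij) hx hy
  set c := α x i / α y i
  have hc : 0 < c :=
    div_pos_iff.2 (mul_pos_iff.1 (hS.mul_pos_of_forall_ne_zero (hcoord i) hne hx hy))
  have hsmul : α x = c • α y := by
    ext j
    have := hratio j
    rw [div_eq_div_iff (hne x hx) (hne y hy)] at this
    simp only [PiLp.smul_apply, smul_eq_mul, c]
    rw [div_mul_eq_mul_div, eq_div_iff (hne y hy)]
    linarith
  rw [hsmul]
  exact (SameRay.sameRay_pos_smul_left (α y) hc).eq_of_norm_eq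
    (by rw [← hsmul, hunit x hx, hunit y hy])

end Preconnected

theorem exists_nontrivial_rational_relation_of_nonconstant_unit_path_general
    (k : ℕ) (a b : ℝ)
    (α : ℝ → EuclideanSpace ℝ (Fin k))
    (hcont : ContinuousOn α (Set.Icc a b))
    (hunit : ∀ s ∈ Set.Icc a b, ‖α s‖ = 1)
    (hnc : ¬ ∀ s ∈ Set.Icc a b, ∀ s' ∈ Set.Icc a b, α s = α s') :
    ∃ s ∈ Set.Icc a b, ∃ β : Fin k → ℚ, β ≠ 0 ∧ ∑ i, (β i : ℝ) * α s i = 0 := by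
  by_contra! h
  exact hnc fun s hs s' hs' => isPreconnected_Icc.eq_of_norm_eq_one_of_not_hasRatRelation hcont
    hunit (fun t ht ⟨β, hβ, hsum⟩ => h t ht β hβ hsum) hs hs'

/-- A continuous nonconstant unit-valued path `α : [a,b] → ℝ^k` admits a point `s` at
which the coordinates of `α s` satisfy a nontrivial rational linear relation. -/
theorem exists_nontrivial_rational_relation_of_nonconstant_unit_path
    (k : ℕ) (hk : 1 ≤ k) (a b : ℝ) (hab : a < b)
    (α : ℝ → EuclideanSpace ℝ (Fin k))
    (hcont : ContinuousOn α (Set.Icc a b))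
    (hunit : ∀ s ∈ Set.Icc a b, ‖α s‖ = 1)
    (hnc : ¬ ∀ s ∈ Set.Icc a b, ∀ s' ∈ Set.Icc a b, α s = α s') :
    ∃ s ∈ Set.Icc a b, ∃ β : Fin k → ℚ, β ≠ 0 ∧ ∑ i, (β i : ℝ) * α s i = 0 :=
  exists_nontrivial_rational_relation_of_nonconstant_unit_path_general k a b α hcont hunit hnc
end

section
/- Let m ≥ 0 and let α_0, α_1, ..., α_m be pairwise distinct real numbers. Then ∑_{j=0}^{m} ∏_{i ≠ j} sgn(α_i − α_j) equals 1 if m is even and equals 0 if m is odd, where the product is over all indices i ∈ {0, ..., m} with i ≠ j. -/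
/-- For pairwise distinct reals `α₀, ..., α_m`, the sum of the signature residues
`∑ⱼ ∏_{i ≠ j} sgn(αᵢ − αⱼ)` equals `1` if `m` is even and `0` if `m` is odd. -/
theorem sum_of_sign_residues (m : ℕ) (α : Fin (m + 1) → ℝ)
    (hα : Function.Injective α) :
    ∑ j, ∏ i ∈ Finset.univ.erase j, Real.sign (α i - α j) =
      if Even m then 1 else 0 := by
  classical
  set c : Fin (m + 1) → ℕ := fun j => (Finset.univ.filter (fun i => α i < α j)).card with hc
  have hprod : ∀ j, ∏ i ∈ Finset.univ.erase j, Real.sign (α i - α j) = (-1 : ℝ) ^ (c j) := by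
    intro j
    have h1 : ∀ i ∈ Finset.univ.erase j, Real.sign (α i - α j)
        = if α i < α j then (-1 : ℝ) else 1 := by
      intro i hi
      have hij : i ≠ j := Finset.ne_of_mem_erase hi
      rcases lt_or_gt_of_ne (fun h => hij (hα h)) with h | h
      · rw [if_pos h, Real.sign_of_neg (by linarith)]
      · rw [if_neg (by linarith), Real.sign_of_pos (by linarith)]
    rw [Finset.prod_congr rfl h1, Finset.prod_ite, Finset.prod_const, Finset.prod_const,
      one_pow, mul_one]
    congr 1
    rw [hc]
    congr 1
    rw [Finset.filter_erase, Finset.erase_eq_of_notMem]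
    simp
  have hle : ∀ j, c j < m + 1 := by
    intro j
    have : (Finset.univ.filter (fun i => α i < α j)) ⊆ Finset.univ.erase j := by
      intro i hi
      simp only [Finset.mem_filter] at hi
      exact Finset.mem_erase.2 ⟨fun h => absurd hi.2 (by simp [h]), Finset.mem_univ i⟩
    calc c j ≤ (Finset.univ.erase j).card := Finset.card_le_card this
      _ < Finset.univ.card := Finset.card_erase_lt_of_mem (Finset.mem_univ j)
      _ = m + 1 := by simp
  set f : Fin (m + 1) → Fin (m + 1) := fun j => ⟨c j, hle j⟩ with hf
  have hfi : Function.Injective f := by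
    intro j₁ j₂ h
    by_contra hne
    have hc12 : c j₁ = c j₂ := congrArg Fin.val h
    wlog hlt : α j₁ < α j₂ generalizing j₁ j₂
    · exact this h.symm (Ne.symm hne) hc12.symm
        (lt_of_le_of_ne (not_lt.1 hlt) (fun hh => hne (hα hh.symm)))
    have hss : (Finset.univ.filter (fun i => α i < α j₁))
        ⊂ (Finset.univ.filter (fun i => α i < α j₂)) := by
      constructor
      · intro i hi
        simp only [Finset.mem_filter] at hi ⊢
        exact ⟨hi.1, lt_trans hi.2 hlt⟩
      · intro hsub
        have := hsub (Finset.mem_filter.2 ⟨Finset.mem_univ j₁, hlt⟩)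
        simp at this
      -- j₁ is in the second set but not the first
    exact absurd hc12 (Nat.ne_of_lt (Finset.card_lt_card hss))
  have hfb : Function.Bijective f := (Finite.injective_iff_bijective).1 hfi
  calc ∑ j, ∏ i ∈ Finset.univ.erase j, Real.sign (α i - α j)
      = ∑ j : Fin (m + 1), (-1 : ℝ) ^ ((f j : ℕ)) := by
        refine Finset.sum_congr rfl fun j _ => ?_
        rw [hprod j]
    _ = ∑ k : Fin (m + 1), (-1 : ℝ) ^ (k : ℕ) :=
        Fintype.sum_bijective f hfb _ _ (fun j => rfl)
    _ = ∑ k ∈ Finset.range (m + 1), (-1 : ℝ) ^ k := Fin.sum_univ_eq_sum_range _ _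
    _ = if Even m then 1 else 0 := by
        rw [neg_one_geom_sum]
        rcases Nat.even_or_odd m with h | h
        · simp [h, Nat.not_odd_iff_even.2 h]
        · simp [h, Nat.not_even_iff_odd.2 h]
end
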